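/- Every FM model output can be realized by a SAM2_A model: for any embeddings f_1,…,f_n ∈ ℝ^d, there exist weight vectors W_{i,j} ∈ ℝ^d and a linear map M : ℝ^{n·n·d} → ℝ such that M applied to the concatenation of the blocks ⟨f_i, f_j⟩·W_{i,j} equals Σ_{i<j} ⟨f_i, f_j⟩. In particular, choosing W_{i,j} = e_1 for i<j and W_{i,j} = 0 otherwise, with M summing the first coordinate of each block, suffices. -/

import Mathlib

section BlockSum

variable {R E ι κ : Type*} [CommSemiring R] [AddCommMonoid E] [Module R E] [Fintype ι] [Fintype κ]

def sumBlocks (φ : E →ₗ[R] R) : (ι → κ → E) →ₗ[R] R :=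
  ∑ i, ∑ j, φ ∘ₗ LinearMap.proj j ∘ₗ LinearMap.proj i

theorem sumBlocks_apply (φ : E →ₗ[R] R) (X : ι → κ → E) :
    sumBlocks φ X = ∑ i, ∑ j, φ (X i j) := by
  simp [sumBlocks, LinearMap.sum_apply]

theorem sumBlocks_smul_ite {φ : E →ₗ[R] R} {e : E} (he : φ e = 1) (c : ι → κ → R)
    (p : ι → κ → Prop) [∀ i j, Decidable (p i j)] :
    sumBlocks φ (fun i j => c i j • if p i j then e else 0)
      = ∑ i, ∑ j, if p i j then c i j else 0 := by
  rw [sumBlocks_apply]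
  refine Finset.sum_congr rfl fun i _ => Finset.sum_congr rfl fun j _ => ?_
  split_ifs <;> simp [he]

end BlockSum

theorem sam2A_realizes_fm (n d : ℕ) (hd : 1 ≤ d) (f : Fin n → EuclideanSpace ℝ (Fin d)) :
    ∃ (W : Fin n → Fin n → EuclideanSpace ℝ (Fin d))
      (M : (Fin n → Fin n → EuclideanSpace ℝ (Fin d)) →ₗ[ℝ] ℝ),
      M (fun i j => (inner ℝ (f i) (f j) : ℝ) • W i j)
        = ∑ i, ∑ j, if i < j then (inner ℝ (f i) (f j) : ℝ) else 0 := by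
  let k : Fin d := ⟨0, hd⟩
  exact ⟨fun i j => if i < j then EuclideanSpace.single k 1 else 0,
    sumBlocks (EuclideanSpace.proj k : EuclideanSpace ℝ (Fin d) →L[ℝ] ℝ).toLinearMap,
    sumBlocks_smul_ite (by simp) _ _⟩
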